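/- Let F = {(u,v,w) ∈ ℝ³ : v ≥ 0, w ≥ 0, v + w ≥ u²} and for t ∈ (−1,1) let x_t = (t, t², 0) (so x_t lies on the manifold M = {(t,t²,0) : t ∈ (−1,1)} ⊂ F). Then the normal cone mapping restricted to M fails to be inner semicontinuous at the origin: the vector (0,−1,0) belongs to N_F(0,0,0), yet there exists ε > 0 such that for every t with 0 < |t| < 1 and every y ∈ N_F(x_t), one has ‖y − (0,−1,0)‖ ≥ ε. -/

import Mathlib

/-!
From a point `(t, t², 0)` with `t ≠ 0` one can move inside `F` (here `valley`) in two directions: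
upwards in `v`, and along the segment to `(t, 0, t²)`, which trades `v` for `w` keeping
`v + w = u²`. A normal `y` there therefore satisfies `y₂ ≤ y₁ ≤ 0`, whence
`‖y - (0, -1, 0)‖² ≥ (y₁ + 1)² + y₁² ≥ 1/2`. At the origin that segment degenerates to a point,
which is why `(0, -1, 0)` can be a normal there.
-/

noncomputable def valleyPoint (t : ℝ) : EuclideanSpace ℝ (Fin 3) := WithLp.toLp 2 (![t, t ^ 2, 0] : Fin 3 → ℝ)

noncomputable def negE1 : EuclideanSpace ℝ (Fin 3) := WithLp.toLp 2 (![0, -1, 0] : Fin 3 → ℝ)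

open RealInnerProductSpace

def normalCone {E : Type*} [NormedAddCommGroup E] [InnerProductSpace ℝ E] (s : Set E) (x : E) :
    Set E :=
  {c | ∀ q ∈ s, ⟪c, q - x⟫ ≤ 0}

def valley : Set (EuclideanSpace ℝ (Fin 3)) := {p | 0 ≤ p 1 ∧ 0 ≤ p 2 ∧ p 0 ^ 2 ≤ p 1 + p 2}

theorem EuclideanSpace.inner_fin_three (x y : EuclideanSpace ℝ (Fin 3)) :
    ⟪x, y⟫ = x 0 * y 0 + x 1 * y 1 + x 2 * y 2 := by
  simp [PiLp.inner_apply, Fin.sum_univ_three, mul_comm]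

theorem negE1_mem_normalCone_valley_zero : negE1 ∈ normalCone valley 0 := by
  rintro q ⟨hq₁, -, -⟩
  simp [EuclideanSpace.inner_fin_three, negE1, hq₁]

section NormalsAlongValley

variable {t : ℝ} {y : EuclideanSpace ℝ (Fin 3)}

theorem coord_one_nonpos_of_mem_normalCone_valley (hy : y ∈ normalCone valley (valleyPoint t)) :
    y 1 ≤ 0 := by
  have hq : WithLp.toLp 2 ![t, t ^ 2 + 1, 0] ∈ valley := by
    refine ⟨?_, ?_, ?_⟩ <;> simp [add_nonneg, sq_nonneg]
  simpa [EuclideanSpace.inner_fin_three, valleyPoint] using hy _ hq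

theorem coord_two_le_coord_one_of_mem_normalCone_valley (ht : t ≠ 0)
    (hy : y ∈ normalCone valley (valleyPoint t)) : y 2 ≤ y 1 := by
  have hq : WithLp.toLp 2 ![t, 0, t ^ 2] ∈ valley := by
    refine ⟨?_, ?_, ?_⟩ <;> simp [sq_nonneg]
  have h : (y 2 - y 1) * t ^ 2 ≤ 0 := by
    simpa [EuclideanSpace.inner_fin_three, valleyPoint, sub_mul] using hy _ hq
  exact sub_nonpos.1 <| nonpos_of_mul_nonpos_left h (by positivity)

end NormalsAlongValley

theorem half_le_norm_sub_negE1 {y : EuclideanSpace ℝ (Fin 3)} (hy₁ : y 1 ≤ 0) (hy₂ : y 2 ≤ y 1) :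
    1 / 2 ≤ ‖y - negE1‖ := by
  have hsq : ‖y - negE1‖ ^ 2 = y 0 ^ 2 + (y 1 + 1) ^ 2 + y 2 ^ 2 := by
    simp [EuclideanSpace.real_norm_sq_eq, Fin.sum_univ_three, negE1]
  have hy₂_sq : y 1 ^ 2 ≤ y 2 ^ 2 := by nlinarith
  refine le_of_sq_le_sq ?_ (norm_nonneg _)
  nlinarith [sq_nonneg (y 0), sq_nonneg (2 * y 1 + 1)]

/-- For `F = {(u,v,w) : v ≥ 0, w ≥ 0, v + w ≥ u²} ⊆ ℝ³` and the manifold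
`M = {(t,t²,0) : t ∈ (−1,1)}`, the normal cone mapping restricted to `M` fails to be
inner semicontinuous at the origin: `(0,−1,0) ∈ N_F(0)`, yet normals at nearby points
`(t,t²,0)` with `0 < |t| < 1` stay uniformly far from `(0,−1,0)`. -/
theorem normal_cone_not_inner_semicontinuous_valley :
    (∀ q ∈ {p : EuclideanSpace ℝ (Fin 3) | 0 ≤ p 1 ∧ 0 ≤ p 2 ∧ p 0 ^ 2 ≤ p 1 + p 2},
        (inner ℝ negE1 (q - (0 : EuclideanSpace ℝ (Fin 3))) : ℝ) ≤ 0) ∧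
      ∃ ε > (0 : ℝ), ∀ t : ℝ, 0 < |t| → |t| < 1 →
        ∀ y : EuclideanSpace ℝ (Fin 3),
          (∀ q ∈ {p : EuclideanSpace ℝ (Fin 3) | 0 ≤ p 1 ∧ 0 ≤ p 2 ∧ p 0 ^ 2 ≤ p 1 + p 2},
            (inner ℝ y (q - valleyPoint t) : ℝ) ≤ 0) →
          ε ≤ ‖y - negE1‖ := by
  refine ⟨negE1_mem_normalCone_valley_zero, 1 / 2, by norm_num, fun t ht _ y hy => ?_⟩
  exact half_le_norm_sub_negE1 (coord_one_nonpos_of_mem_normalCone_valley hy)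
    (coord_two_le_coord_one_of_mem_normalCone_valley (abs_pos.1 ht) hy)
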